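/- Let X, Y ⊆ ℝ^d be nonempty closed convex sets and f : ℝ^d × ℝ^d → ℝ continuously differentiable with ‖∇_x f(x₁,y) − ∇_x f(x₂,y)‖ ≤ L_x ‖x₁ − x₂‖ and ‖∇_y f(x₁,y) − ∇_y f(x₂,y)‖ ≤ L_y ‖x₁ − x₂‖. Let α, β > 0, x^t ∈ X, y^t ∈ Y, x^{t+1} = proj_X(x^t − α ∇_x f(x^t, y^t)), y^{t+1} = proj_Y(y^t + β ∇_y f(x^{t+1}, y^t)). Then the proximal gradient satisfies ‖G(x^t, y^t)‖ ≤ (3/α)‖x^{t+1} − x^t‖ + L_y ‖x^{t+1} − x^t‖ + (3/β)‖y^{t+1} − y^t‖. -/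
import Mathlib


/-- Partial gradient of `f(x,y)` with respect to `x`. -/
noncomputable def gradX {d : ℕ} (f : EuclideanSpace ℝ (Fin d) → EuclideanSpace ℝ (Fin d) → ℝ)
    (x y : EuclideanSpace ℝ (Fin d)) : EuclideanSpace ℝ (Fin d) :=
  gradient (fun x' => f x' y) x

/-- Partial gradient of `f(x,y)` with respect to `y`. -/
noncomputable def gradY {d : ℕ} (f : EuclideanSpace ℝ (Fin d) → EuclideanSpace ℝ (Fin d) → ℝ)
    (x y : EuclideanSpace ℝ (Fin d)) : EuclideanSpace ℝ (Fin d) :=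
  gradient (f x) y

/-- `proj` is the Euclidean projection map onto `C`:
`proj a` is the (unique, for `C` closed convex) minimizer of `‖z - a‖` over `z ∈ C`. -/
def IsProjMap {d : ℕ} (C : Set (EuclideanSpace ℝ (Fin d)))
    (proj : EuclideanSpace ℝ (Fin d) → EuclideanSpace ℝ (Fin d)) : Prop :=
  ∀ a, proj a ∈ C ∧ ∀ z ∈ C, ‖proj a - a‖ ≤ ‖z - a‖


open RealInnerProductSpace in
lemma isProjMap_inner_le' {d : ℕ} {C : Set (EuclideanSpace ℝ (Fin d))}
    {proj : EuclideanSpace ℝ (Fin d) → EuclideanSpace ℝ (Fin d)}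
    (hC : Convex ℝ C) (hp : IsProjMap C proj) (a : EuclideanSpace ℝ (Fin d)) :
    ∀ z ∈ C, ⟪a - proj a, z - proj a⟫ ≤ 0 := by
  haveI : Nonempty C := ⟨⟨proj a, (hp a).1⟩⟩
  have hb : BddBelow (Set.range fun w : C => ‖a - (w : EuclideanSpace ℝ (Fin d))‖) := by
    refine ⟨0, ?_⟩; rintro x ⟨w, rfl⟩; exact norm_nonneg _
  have h1 : ‖a - proj a‖ = ⨅ w : C, ‖a - w‖ := by
    apply le_antisymm
    · refine le_ciInf fun w => ?_
      rw [norm_sub_rev, norm_sub_rev a]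
      exact (hp a).2 w w.2
    · exact ciInf_le hb (⟨proj a, (hp a).1⟩ : C)
  exact (norm_eq_iInf_iff_real_inner_le_zero hC (hp a).1).mp h1

open RealInnerProductSpace in
lemma isProjMap_nonexpansive' {d : ℕ} {C : Set (EuclideanSpace ℝ (Fin d))}
    {proj : EuclideanSpace ℝ (Fin d) → EuclideanSpace ℝ (Fin d)}
    (hC : Convex ℝ C) (hp : IsProjMap C proj) (a b : EuclideanSpace ℝ (Fin d)) :
    ‖proj a - proj b‖ ≤ ‖a - b‖ := by
  have h1 := isProjMap_inner_le' hC hp a (proj b) (hp b).1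
  have h2 := isProjMap_inner_le' hC hp b (proj a) (hp a).1
  have key : ‖proj a - proj b‖ ^ 2 ≤ ⟪proj a - proj b, a - b⟫ := by
    have e : ⟪proj a - proj b, a - b⟫ - ‖proj a - proj b‖ ^ 2 =
        (-⟪a - proj a, proj b - proj a⟫) + (-⟪b - proj b, proj a - proj b⟫) := by
      rw [← real_inner_self_eq_norm_sq]
      simp only [inner_sub_left, inner_sub_right]
      linarith [real_inner_comm a (proj a), real_inner_comm a (proj b),
        real_inner_comm b (proj a), real_inner_comm b (proj b),
        real_inner_comm (proj a) (proj b)]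
    nlinarith
  have cs := real_inner_le_norm (proj a - proj b) (a - b)
  nlinarith [norm_nonneg (proj a - proj b), norm_nonneg (a - b)]

lemma sqrt_sq_add_sq_le' {a b : ℝ} (ha : 0 ≤ a) (hb : 0 ≤ b) :
    Real.sqrt (a ^ 2 + b ^ 2) ≤ a + b := by
  calc Real.sqrt (a ^ 2 + b ^ 2) ≤ Real.sqrt ((a + b) ^ 2) :=
        Real.sqrt_le_sqrt (by nlinarith)
    _ = a + b := Real.sqrt_sq (by linarith)

/-- Bound on the norm of the proximal gradient
`G(x,y) = [(1/α)(x - proj_X(x - α∇_x f(x,y))); (1/β)(y - proj_Y(y + β∇_y f(x,y)))] ∈ ℝ^{2d}`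
(whose Euclidean norm is the square root of the sum of the squared block norms) at one
alternating projected gradient descent-ascent step:
`‖G(x^t,y^t)‖ ≤ (3/α)‖x^{t+1}-x^t‖ + L_y‖x^{t+1}-x^t‖ + (3/β)‖y^{t+1}-y^t‖`. -/
theorem zo_minmax_proximal_gradient_bound
    {d : ℕ} (X Y : Set (EuclideanSpace ℝ (Fin d)))
    (hXne : X.Nonempty) (hXclosed : IsClosed X) (hXconvex : Convex ℝ X)
    (hYne : Y.Nonempty) (hYclosed : IsClosed Y) (hYconvex : Convex ℝ Y)
    (f : EuclideanSpace ℝ (Fin d) → EuclideanSpace ℝ (Fin d) → ℝ)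
    (hf : ContDiff ℝ 1 (Function.uncurry f))
    (Lx Ly α β : ℝ) (hα : 0 < α) (hβ : 0 < β)
    (hLx : ∀ (x₁ x₂ y : EuclideanSpace ℝ (Fin d)),
      ‖gradX f x₁ y - gradX f x₂ y‖ ≤ Lx * ‖x₁ - x₂‖)
    (hLy : ∀ (x₁ x₂ y : EuclideanSpace ℝ (Fin d)),
      ‖gradY f x₁ y - gradY f x₂ y‖ ≤ Ly * ‖x₁ - x₂‖)
    (projX projY : EuclideanSpace ℝ (Fin d) → EuclideanSpace ℝ (Fin d))
    (hprojX : IsProjMap X projX) (hprojY : IsProjMap Y projY)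
    (xt yt : EuclideanSpace ℝ (Fin d)) (hxt : xt ∈ X) (hyt : yt ∈ Y)
    (xt1 yt1 : EuclideanSpace ℝ (Fin d))
    (hxt1 : xt1 = projX (xt - α • gradX f xt yt))
    (hyt1 : yt1 = projY (yt + β • gradY f xt1 yt)) :
    Real.sqrt
        (‖(1 / α) • (xt - projX (xt - α • gradX f xt yt))‖ ^ 2 +
         ‖(1 / β) • (yt - projY (yt + β • gradY f xt yt))‖ ^ 2) ≤
      3 / α * ‖xt1 - xt‖ + Ly * ‖xt1 - xt‖ + 3 / β * ‖yt1 - yt‖ := by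
  set g0 := gradY f xt yt with hg0
  set g1 := gradY f xt1 yt with hg1
  set p := projY (yt + β • g0) with hpdef
  have hXn : (0:ℝ) ≤ ‖xt1 - xt‖ := norm_nonneg _
  have hZn : (0:ℝ) ≤ ‖yt1 - yt‖ := norm_nonneg _
  have hαi : (0:ℝ) < 1 / α := by positivity
  have hβi : (0:ℝ) < 1 / β := by positivity
  have hA : ‖(1 / α) • (xt - projX (xt - α • gradX f xt yt))‖ = (1/α) * ‖xt1 - xt‖ := by
    rw [← hxt1, norm_smul, norm_sub_rev]
    rw [Real.norm_eq_abs, abs_of_pos hαi]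
  have hB : ‖(1 / β) • (yt - p)‖ = (1/β) * ‖yt - p‖ := by
    rw [norm_smul, Real.norm_eq_abs, abs_of_pos hβi]
  have hBp : ‖yt - p‖ ≤ ‖yt1 - yt‖ + β * (Ly * ‖xt1 - xt‖) := by
    have t1 : ‖yt - p‖ ≤ ‖yt - yt1‖ + ‖yt1 - p‖ := norm_sub_le_norm_sub_add_norm_sub _ _ _
    have t2 : ‖yt1 - p‖ ≤ β * (Ly * ‖xt1 - xt‖) := by
      rw [hyt1, hpdef]
      calc ‖projY (yt + β • g1) - projY (yt + β • g0)‖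
          ≤ ‖(yt + β • g1) - (yt + β • g0)‖ := isProjMap_nonexpansive' hYconvex hprojY _ _
        _ = β * ‖g1 - g0‖ := by
            rw [add_sub_add_left_eq_sub, ← smul_sub, norm_smul, Real.norm_eq_abs,
              abs_of_pos hβ]
        _ ≤ β * (Ly * ‖xt1 - xt‖) :=
            mul_le_mul_of_nonneg_left (hLy xt1 xt yt) hβ.le
    rw [norm_sub_rev yt yt1] at t1
    linarith
  rw [hA, hB]
  have hs := sqrt_sq_add_sq_le' (a := (1/α) * ‖xt1 - xt‖) (b := (1/β) * ‖yt - p‖)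
    (by positivity) (by positivity)
  have step : (1/β) * ‖yt - p‖ ≤ (1/β) * ‖yt1 - yt‖ + Ly * ‖xt1 - xt‖ := by
    have h := mul_le_mul_of_nonneg_left hBp hβi.le
    have hc : (1/β) * (β * (Ly * ‖xt1 - xt‖)) = Ly * ‖xt1 - xt‖ := by
      field_simp
    rw [mul_add, hc] at h
    linarith
  have c1 : (1/α) * ‖xt1 - xt‖ ≤ (3/α) * ‖xt1 - xt‖ := by
    apply mul_le_mul_of_nonneg_right _ hXn
    gcongr
    norm_num
  have c2 : (1/β) * ‖yt1 - yt‖ ≤ (3/β) * ‖yt1 - yt‖ := by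
    apply mul_le_mul_of_nonneg_right _ hZn
    gcongr
    norm_num
  linarith
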